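/- Let G be a toroidal grid diagram of size n and let H be the grid diagram obtained by reflecting G through the antidiagonal, i.e., H has an X-marking in square (n−1−j, n−1−i) for each X-marked square (i,j) of G, and likewise for O-markings. Let ρ: S(G) → S(H) send the generator with point set {(i, x(i))} to the generator with point set {((n−x(i)) mod n, (n−i) mod n)}. Then: (a) ρ is a bijection; (b) ρ(x^UR(G)) = x^LL(H) and ρ(x^LL(G)) = x^UR(H); (c) M_H(ρ(x)) = M_G(x) and A_H(ρ(x)) = A_G(x) for every generator x; and (d) for all generators x, y, reflection induces a bijection from the rectangles in Rect(x,y) whose interiors are disjoint from the X-markings of G onto the rectangles in Rect(ρ(x),ρ(y)) whose interiors are disjoint from the X-markings of H, preserving the number of O-markings in the interior. (This is the combinatorial isomorphism realizing Φ₁ of Proposition 1.2; H represents the orientation reverse −K⃗ of the Legendrian knot of G and the canonical cycles are interchanged.) -/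

import Mathlib

open Finset

open Fin.NatCast

noncomputable section

open scoped Classical

/-- A formal rational-coefficient combination of points in the plane. -/
abbrev PtComb := (ℝ × ℝ) →₀ ℚ

/-- `I(A,B)`: the number of pairs `(a, b) ∈ A × B` with `a₁ < b₁` and `a₂ < b₂`,
extended bilinearly to formal combinations of finite point sets. -/
def Ifun (f g : PtComb) : ℚ :=
  ∑ p ∈ f.support, ∑ q ∈ g.support,
    if p.1 < q.1 ∧ p.2 < q.2 then f p * g q else 0

/-- `J(A,B) = (I(A,B) + I(B,A))/2`. -/
def Jfun (f g : PtComb) : ℚ := (Ifun f g + Ifun g f) / 2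

/-- A toroidal grid diagram of size `n`: a pair of permutations `σX`, `σO` of
`{0, …, n-1}` with `σX i ≠ σO i` for all `i`. -/
structure Grid (n : ℕ) where
  σX : Equiv.Perm (Fin n)
  σO : Equiv.Perm (Fin n)
  disj : ∀ i, σX i ≠ σO i

namespace Grid

variable {n : ℕ}

/-- `G` represents a knot: the permutation `σO⁻¹ ∘ σX` has a single orbit,
i.e. it is an `n`-cycle. -/
def RepKnot (G : Grid n) : Prop :=
  ∀ i j : Fin n, ∃ k : ℕ, ((G.σO⁻¹ * G.σX) ^ k) i = j

/-- The `X`-marking of column `i`, at the planar point `(i + 1/2, σX i + 1/2)`. -/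
def Xpt (G : Grid n) (i : Fin n) : ℝ × ℝ :=
  (((i : ℕ) : ℝ) + 1/2, ((G.σX i : ℕ) : ℝ) + 1/2)

/-- The `O`-marking of column `i`, at the planar point `(i + 1/2, σO i + 1/2)`. -/
def Opt (G : Grid n) (i : Fin n) : ℝ × ℝ :=
  (((i : ℕ) : ℝ) + 1/2, ((G.σO i : ℕ) : ℝ) + 1/2)

/-- The set `𝕏` of `X`-markings, as a formal point combination. -/
def XX (G : Grid n) : PtComb := ∑ i : Fin n, Finsupp.single (G.Xpt i) 1

/-- The set `𝕆` of `O`-markings, as a formal point combination. -/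
def OO (G : Grid n) : PtComb := ∑ i : Fin n, Finsupp.single (G.Opt i) 1

/-- The point set `{(i, x i)}` of a generator `x`, as a formal point combination. -/
def pts (x : Equiv.Perm (Fin n)) : PtComb :=
  ∑ i : Fin n, Finsupp.single (((i : ℕ) : ℝ), ((x i : ℕ) : ℝ)) 1

/-- The Maslov grading `M(x) = J(x − 𝕆, x − 𝕆) + 1`. -/
def M (G : Grid n) (x : Equiv.Perm (Fin n)) : ℚ :=
  Jfun (pts x - G.OO) (pts x - G.OO) + 1

/-- The `X`-Maslov grading `M_𝕏(x) = J(x − 𝕏, x − 𝕏) + 1`. -/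
def MX (G : Grid n) (x : Equiv.Perm (Fin n)) : ℚ :=
  Jfun (pts x - G.XX) (pts x - G.XX) + 1

/-- The Alexander grading `A(x) = J(x − (𝕏+𝕆)/2, 𝕏 − 𝕆) − (n−1)/2`. -/
def A (G : Grid n) (x : Equiv.Perm (Fin n)) : ℚ :=
  Jfun (pts x - (2 : ℚ)⁻¹ • (G.XX + G.OO)) (G.XX - G.OO) - ((n : ℚ) - 1) / 2

/-- The canonical generator `x^LL`, whose points are the lower-left corners of the
`X`-marked squares. -/
def xLL (G : Grid n) : Equiv.Perm (Fin n) := G.σX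

/-- The canonical generator `x^UR`, `x^UR(i) = σX((i−1) mod n) + 1 (mod n)`, whose points
are the upper-right corners of the `X`-marked squares (reduced mod `n`). -/
def xUR [NeZero n] (G : Grid n) : Equiv.Perm (Fin n) where
  toFun i := G.σX (i - 1) + 1
  invFun i := G.σX.symm (i - 1) + 1
  left_inv i := by simp
  right_inv i := by simp

end Grid

/-- A rectangle on the torus `ℝ²/nℤ²` with sides on the grid lines: it has lower-left
corner at the lattice point `(c, r)`, width `w` and height `h`, with side lengths
in `(0, n)`. -/
structure Rect (n : ℕ) where
  c : Fin n
  r : Fin n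
  w : ℕ
  h : ℕ
  wpos : 0 < w
  wlt : w < n
  hpos : 0 < h
  hlt : h < n

namespace Rect

variable {n : ℕ} [NeZero n]

/-- `R` connects the generator `x` to the generator `y`: the lower-left and upper-right
corners of `R` are points of `x`, the upper-left and lower-right corners are points of
`y`, and `x` and `y` agree at all other columns (so they differ in exactly two points). -/
def Connects (R : Rect n) (x y : Equiv.Perm (Fin n)) : Prop :=
  x R.c = R.r ∧
  x (R.c + (R.w : Fin n)) = R.r + (R.h : Fin n) ∧
  y R.c = R.r + (R.h : Fin n) ∧
  y (R.c + (R.w : Fin n)) = R.r ∧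
  ∀ k : Fin n, k ≠ R.c → k ≠ R.c + (R.w : Fin n) → x k = y k

/-- The `X`-marking of column `k` lies in the interior of `R` (on the torus). -/
def XIn (G : Grid n) (R : Rect n) (k : Fin n) : Prop :=
  ((k - R.c : Fin n) : ℕ) < R.w ∧ ((G.σX k - R.r : Fin n) : ℕ) < R.h

/-- The `O`-marking of column `k` lies in the interior of `R` (on the torus). -/
def OIn (G : Grid n) (R : Rect n) (k : Fin n) : Prop :=
  ((k - R.c : Fin n) : ℕ) < R.w ∧ ((G.σO k - R.r : Fin n) : ℕ) < R.h

/-- The number of `O`-markings of `G` in the interior of `R`. -/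
def Ocnt (G : Grid n) (R : Rect n) : ℕ :=
  (univ.filter fun k => R.OIn G k).card

end Rect

/-- The map on generators induced by reflection through the antidiagonal `x = −y`:
the generator with point set `{(i, x i)}` is sent to the generator with point set
`{((n − x i) mod n, (n − i) mod n)}`. -/
def reflGen {n : ℕ} [NeZero n] (x : Equiv.Perm (Fin n)) : Equiv.Perm (Fin n) :=
  ((Equiv.neg (Fin n)).trans x.symm).trans (Equiv.neg (Fin n))

/-- The image of a rectangle under reflection through the antidiagonal. -/
def Rect.reflAD {n : ℕ} [NeZero n] (R : Rect n) : Rect n where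
  c := -R.r - (R.h : Fin n)
  r := -R.c - (R.w : Fin n)
  w := R.h
  h := R.w
  wpos := R.hpos
  wlt := R.hlt
  hpos := R.wpos
  hlt := R.wlt


set_option linter.unusedSectionVars false
set_option linter.unusedVariables false

lemma Ifun_eq (f g : PtComb) (s t : Finset (ℝ × ℝ)) (hs : f.support ⊆ s) (ht : g.support ⊆ t) :
    Ifun f g = ∑ p ∈ s, ∑ q ∈ t, if p.1 < q.1 ∧ p.2 < q.2 then f p * g q else 0 := by
  unfold Ifun
  rw [Finset.sum_subset hs]
  · refine Finset.sum_congr rfl fun p hp => ?_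
    refine Finset.sum_subset ht fun q hq hq' => ?_
    rw [Finsupp.notMem_support_iff.mp hq', mul_zero]; simp
  · intro p hp hp'
    rw [Finsupp.notMem_support_iff.mp hp']
    simp

lemma Ifun_add_left (f g h : PtComb) : Ifun (f + g) h = Ifun f h + Ifun g h := by
  rw [Ifun_eq (f+g) h (f.support ∪ g.support) h.support
      (Finsupp.support_add) subset_rfl,
    Ifun_eq f h (f.support ∪ g.support) h.support Finset.subset_union_left subset_rfl,
    Ifun_eq g h (f.support ∪ g.support) h.support Finset.subset_union_right subset_rfl,
    ← Finset.sum_add_distrib]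
  refine Finset.sum_congr rfl fun p _ => ?_
  rw [← Finset.sum_add_distrib]
  refine Finset.sum_congr rfl fun q _ => ?_
  rw [Finsupp.add_apply]
  split_ifs <;> ring

lemma Ifun_add_right (f g h : PtComb) : Ifun f (g + h) = Ifun f g + Ifun f h := by
  rw [Ifun_eq f (g+h) f.support (g.support ∪ h.support) subset_rfl Finsupp.support_add,
    Ifun_eq f g f.support (g.support ∪ h.support) subset_rfl Finset.subset_union_left,
    Ifun_eq f h f.support (g.support ∪ h.support) subset_rfl Finset.subset_union_right,
    ← Finset.sum_add_distrib]
  refine Finset.sum_congr rfl fun p _ => ?_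
  rw [← Finset.sum_add_distrib]
  refine Finset.sum_congr rfl fun q _ => ?_
  rw [Finsupp.add_apply]
  split_ifs <;> ring

lemma Ifun_smul_left (c : ℚ) (f g : PtComb) : Ifun (c • f) g = c * Ifun f g := by
  rw [Ifun_eq (c • f) g f.support g.support (Finsupp.support_smul) subset_rfl,
    Ifun_eq f g f.support g.support subset_rfl subset_rfl, Finset.mul_sum]
  refine Finset.sum_congr rfl fun p _ => ?_
  rw [Finset.mul_sum]
  refine Finset.sum_congr rfl fun q _ => ?_
  rw [Finsupp.smul_apply, smul_eq_mul]
  split_ifs <;> ring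

lemma Ifun_smul_right (c : ℚ) (f g : PtComb) : Ifun f (c • g) = c * Ifun f g := by
  rw [Ifun_eq f (c • g) f.support g.support subset_rfl (Finsupp.support_smul),
    Ifun_eq f g f.support g.support subset_rfl subset_rfl, Finset.mul_sum]
  refine Finset.sum_congr rfl fun p _ => ?_
  rw [Finset.mul_sum]
  refine Finset.sum_congr rfl fun q _ => ?_
  rw [Finsupp.smul_apply, smul_eq_mul]
  split_ifs <;> ring

lemma Ifun_neg_left (f g : PtComb) : Ifun (-f) g = - Ifun f g := by
  rw [← neg_one_smul ℚ f, Ifun_smul_left]; ring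

lemma Ifun_neg_right (f g : PtComb) : Ifun f (-g) = - Ifun f g := by
  rw [← neg_one_smul ℚ g, Ifun_smul_right]; ring

lemma Ifun_sub_left (f g h : PtComb) : Ifun (f - g) h = Ifun f h - Ifun g h := by
  rw [sub_eq_add_neg, Ifun_add_left, Ifun_neg_left]; ring

lemma Ifun_sub_right (f g h : PtComb) : Ifun f (g - h) = Ifun f g - Ifun f h := by
  rw [sub_eq_add_neg, Ifun_add_right, Ifun_neg_right]; ring

lemma Ifun_eval {n m : ℕ} (A : Fin n → ℝ × ℝ) (B : Fin m → ℝ × ℝ)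
    (hA : Function.Injective A) (hB : Function.Injective B) :
    Ifun (∑ i, Finsupp.single (A i) 1) (∑ j, Finsupp.single (B j) 1)
      = ∑ i : Fin n, ∑ j : Fin m,
          if (A i).1 < (B j).1 ∧ (A i).2 < (B j).2 then 1 else 0 := by
  have hsupp : ∀ {k : ℕ} (C : Fin k → ℝ × ℝ),
      (∑ i, Finsupp.single (C i) (1:ℚ)).support ⊆ Finset.image C univ := by
    intro k C
    refine (Finsupp.support_finset_sum).trans ?_
    intro p hp
    simp only [Finset.mem_biUnion] at hp
    obtain ⟨i, _, hi⟩ := hp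
    have := Finsupp.support_single_subset hi
    simp only [Finset.mem_singleton] at this
    simp [this]
  have happ : ∀ {k : ℕ} (C : Fin k → ℝ × ℝ) (hC : Function.Injective C) (i0 : Fin k),
      (∑ i, Finsupp.single (C i) (1:ℚ)) (C i0) = 1 := by
    intro k C hC i0
    rw [Finset.sum_apply']
    simp [Finsupp.single_apply, hC.eq_iff]
  rw [Ifun_eq _ _ _ _ (hsupp A) (hsupp B),
    Finset.sum_image (fun a _ b _ h => hA h)]
  refine Finset.sum_congr rfl fun i _ => ?_
  rw [Finset.sum_image (fun a _ b _ h => hB h)]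
  refine Finset.sum_congr rfl fun j _ => ?_
  rw [happ A hA, happ B hB, one_mul]

section FinHelpers
variable {n : ℕ} [NeZero n]

lemma val0 : ((0 : Fin n) : ℕ) = 0 := rfl

lemma fin_rev_eq (i : Fin n) : Fin.rev i = -1 - i := by
  cases n with
  | zero => exact absurd rfl (NeZero.ne 0)
  | succ m =>
    rw [← Fin.last_sub]
    congr 1
    ext
    simp [Fin.coe_neg_one]

lemma val_neg (u : Fin n) : ((-u : Fin n) : ℕ) = if u = 0 then 0 else n - (u : ℕ) := by
  rw [Fin.coe_neg]
  rcases eq_or_ne u 0 with h | h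
  · simp [h]
  · rw [if_neg h]
    have hval : (u : ℕ) ≠ 0 := fun hh => h (Fin.ext hh)
    have := u.isLt
    rw [Nat.mod_eq_of_lt (by omega)]

lemma val_sub (u v : Fin n) :
    ((u - v : Fin n) : ℕ) = if (v : ℕ) ≤ (u : ℕ) then (u : ℕ) - v else (u : ℕ) + n - v := by
  rw [Fin.sub_def]
  have hv := v.isLt
  have hu := u.isLt
  rcases le_or_gt (v : ℕ) (u : ℕ) with h | h
  · rw [if_pos h]
    show (n - (v:ℕ) + u) % n = (u:ℕ) - v
    have he : n - (v:ℕ) + u = n + ((u:ℕ) - v) := by omega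
    rw [he, Nat.add_mod_left, Nat.mod_eq_of_lt (by omega)]
  · rw [if_neg (not_le.mpr h)]
    show (n - (v:ℕ) + u) % n = (u:ℕ) + n - v
    rw [Nat.mod_eq_of_lt (by omega)]
    omega

lemma val_eq_zero_iff' {u : Fin n} : (u : ℕ) = 0 ↔ u = 0 :=
  ⟨fun h => Fin.ext h, fun h => by simp [h, val0]⟩

lemma neg_lt_neg_iff' (u v : Fin n) :
    (-u : Fin n) < -v ↔ (v ≠ 0 ∧ (u = 0 ∨ v < u)) := by
  have hu := u.isLt
  have hv := v.isLt
  rw [Fin.lt_def, val_neg, val_neg]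
  rcases eq_or_ne u 0 with h | h <;> rcases eq_or_ne v 0 with h' | h'
  · simp [h, h']
  · rw [if_pos h, if_neg h']
    have hv0 : (v : ℕ) ≠ 0 := fun hh => h' (Fin.ext hh)
    simp only [h', ne_eq, not_false_eq_true, true_and]
    constructor
    · intro _; exact Or.inl h
    · intro _; omega
  · rw [if_neg h, if_pos h']
    simp only [h', ne_eq, not_true_eq_false, false_and, iff_false]
    omega
  · rw [if_neg h, if_neg h']
    have hu0 : (u : ℕ) ≠ 0 := fun hh => h (Fin.ext hh)
    have hv0 : (v : ℕ) ≠ 0 := fun hh => h' (Fin.ext hh)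
    simp only [h', ne_eq, not_false_eq_true, true_and, h, false_or, Fin.lt_def]
    omega

lemma neg_le_rev_iff (u v : Fin n) :
    (-u : Fin n) ≤ Fin.rev v ↔ (u = 0 ∨ v < u) := by
  have hu := u.isLt
  have hv := v.isLt
  rw [Fin.le_def, Fin.val_rev, val_neg]
  rcases eq_or_ne u 0 with h | h
  · rw [if_pos h]
    simp [h]
  · rw [if_neg h]
    have hu0 : (u : ℕ) ≠ 0 := fun hh => h (Fin.ext hh)
    simp only [h, false_or, Fin.lt_def]
    omega

lemma rev_lt_neg_iff (u v : Fin n) :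
    Fin.rev v < (-u : Fin n) ↔ (u ≠ 0 ∧ u ≤ v) := by
  have hu := u.isLt
  have hv := v.isLt
  rw [Fin.lt_def, Fin.val_rev, val_neg]
  rcases eq_or_ne u 0 with h | h
  · rw [if_pos h]
    simp only [h, ne_eq, not_true_eq_false, false_and, iff_false]
    omega
  · rw [if_neg h]
    have hu0 : (u : ℕ) ≠ 0 := fun hh => h (Fin.ext hh)
    simp only [h, ne_eq, not_false_eq_true, true_and, Fin.le_def]
    omega

end FinHelpers

/-- indicator with a fixed (classical) decidability instance -/
def ind (P : Prop) : ℚ := if P then 1 else 0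

lemma ind_congr {P Q : Prop} (h : P ↔ Q) : ind P = ind Q := by
  unfold ind; exact if_congr h rfl rfl

lemma ind_true {P : Prop} (h : P) : ind P = 1 := by simp [ind, h]

lemma ind_false {P : Prop} (h : ¬ P) : ind P = 0 := by simp [ind, h]

section Counts
variable {n : ℕ} [NeZero n]

lemma sum_ind_card (P : Fin n → Prop) [DecidablePred P] :
    ∑ u : Fin n, ind (P u) = ((univ.filter P).card : ℚ) := by
  rw [Finset.card_filter]
  push_cast
  refine Finset.sum_congr rfl fun u _ => ?_
  by_cases h : P u <;> simp [ind, h]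

lemma count_lt (v : Fin n) : ∑ u : Fin n, ind (u < v) = ((v : ℕ) : ℚ) := by
  rw [sum_ind_card]
  have : univ.filter (fun u : Fin n => u < v) = Finset.Iio v := by ext u; simp
  rw [this, Fin.card_Iio]

lemma count_gt (v : Fin n) : ∑ u : Fin n, ind (v < u) = (n : ℚ) - 1 - ((v : ℕ) : ℚ) := by
  rw [sum_ind_card]
  have : univ.filter (fun u : Fin n => v < u) = Finset.Ioi v := by ext u; simp
  rw [this, Fin.card_Ioi]
  have hv := v.isLt
  rw [show n - 1 - (v : ℕ) = n - (1 + (v : ℕ)) by omega, Nat.cast_sub (by omega)]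
  push_cast
  ring

lemma count_ge (v : Fin n) : ∑ u : Fin n, ind (v ≤ u) = (n : ℚ) - ((v : ℕ) : ℚ) := by
  rw [sum_ind_card]
  have : univ.filter (fun u : Fin n => v ≤ u) = Finset.Ici v := by ext u; simp
  rw [this, Fin.card_Ici, Nat.cast_sub v.isLt.le]

lemma count_true : ∑ _u : Fin n, (1 : ℚ) = (n : ℚ) := by
  simp [Finset.card_univ]

lemma count_eq (c : Fin n) : ∑ u : Fin n, ind (u = c) = 1 := by
  rw [sum_ind_card]
  have : univ.filter (fun u : Fin n => u = c) = {c} := by ext u; simp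
  rw [this, Finset.card_singleton, Nat.cast_one]

lemma count_lt_perm (σ : Equiv.Perm (Fin n)) (v : Fin n) :
    ∑ u : Fin n, ind (σ u < v) = ((v : ℕ) : ℚ) := by
  rw [show (∑ u : Fin n, ind (σ u < v)) = ∑ u : Fin n, (fun w => ind (w < v)) (σ u) from rfl,
    Equiv.sum_comp σ (fun w => ind (w < v))]
  exact count_lt v

lemma count_gt_perm (σ : Equiv.Perm (Fin n)) (v : Fin n) :
    ∑ u : Fin n, ind (v < σ u) = (n : ℚ) - 1 - ((v : ℕ) : ℚ) := by
  rw [show (∑ u : Fin n, ind (v < σ u)) = ∑ u : Fin n, (fun w => ind (v < w)) (σ u) from rfl,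
    Equiv.sum_comp σ (fun w => ind (v < w))]
  exact count_gt v

lemma count_ge_perm (σ : Equiv.Perm (Fin n)) (v : Fin n) :
    ∑ u : Fin n, ind (v ≤ σ u) = (n : ℚ) - ((v : ℕ) : ℚ) := by
  rw [show (∑ u : Fin n, ind (v ≤ σ u)) = ∑ u : Fin n, (fun w => ind (v ≤ w)) (σ u) from rfl,
    Equiv.sum_comp σ (fun w => ind (v ≤ w))]
  exact count_ge v

lemma fin_pos_of_ne {u : Fin n} (h : u ≠ 0) : (0 : Fin n) < u := by
  rw [Fin.lt_def, val0]
  have := (not_iff_not.mpr (val_eq_zero_iff' (u := u))).mpr h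
  omega

lemma count_Ioo (v : Fin n) (hv : v ≠ 0) :
    ∑ u : Fin n, ind (0 < u ∧ u < v) = ((v : ℕ) : ℚ) - 1 := by
  have key : ∀ u : Fin n, ind (0 < u ∧ u < v) = ind (u < v) - ind (u = 0) := by
    intro u
    rcases eq_or_ne u 0 with h | h
    · rw [h, ind_false (by simp), ind_true (fin_pos_of_ne hv), ind_true rfl]
      ring
    · rw [ind_congr (and_iff_right (fin_pos_of_ne h)), ind_false h]
      ring
  rw [Finset.sum_congr rfl fun u _ => key u, Finset.sum_sub_distrib, count_lt, count_eq]

lemma count_ne0 : ∑ u : Fin n, ind (u ≠ 0) = (n : ℚ) - 1 := by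
  have key : ∀ u : Fin n, ind (u ≠ 0) = 1 - ind (u = 0) := by
    intro u
    rcases eq_or_ne u 0 with h | h
    · rw [ind_false (by simp [h]), ind_true h]; ring
    · rw [ind_true h, ind_false h]; ring
  rw [Finset.sum_congr rfl fun u _ => key u, Finset.sum_sub_distrib, count_eq, count_true]

lemma sum_split1 (F : Fin n → ℚ) : ∑ a : Fin n, F a = F 0 + ∑ a ∈ univ.erase 0, F a :=
  (Finset.add_sum_erase univ F (mem_univ 0)).symm

lemma sum_split2 (F : Fin n → ℚ) {z : Fin n} (hz : z ≠ 0) :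
    ∑ a : Fin n, F a = F 0 + F z + ∑ a ∈ (univ.erase 0).erase z, F a := by
  rw [sum_split1 F]
  have hzmem : z ∈ univ.erase 0 := by simp [hz]
  rw [← Finset.add_sum_erase _ F hzmem]
  ring

end Counts

section Eval
variable {n : ℕ} [NeZero n]

def genPt (x : Equiv.Perm (Fin n)) (i : Fin n) : ℝ × ℝ :=
  (((i : ℕ) : ℝ), ((x i : ℕ) : ℝ))

def markPt (σ : Equiv.Perm (Fin n)) (i : Fin n) : ℝ × ℝ :=
  (((i : ℕ) : ℝ) + 1/2, ((σ i : ℕ) : ℝ) + 1/2)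

def markComb (σ : Equiv.Perm (Fin n)) : PtComb :=
  ∑ i : Fin n, Finsupp.single (markPt σ i) 1

lemma pts_eq (x : Equiv.Perm (Fin n)) :
    Grid.pts x = ∑ i : Fin n, Finsupp.single (genPt x i) 1 := rfl

lemma XX_eq (G : Grid n) : G.XX = markComb G.σX := rfl

lemma OO_eq (G : Grid n) : G.OO = markComb G.σO := rfl

lemma genPt_inj (x : Equiv.Perm (Fin n)) : Function.Injective (genPt x) := by
  intro i j h
  have h1 : ((i : ℕ) : ℝ) = ((j : ℕ) : ℝ) := congrArg Prod.fst h
  exact Fin.ext (Nat.cast_injective h1)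

lemma markPt_inj (σ : Equiv.Perm (Fin n)) : Function.Injective (markPt σ) := by
  intro i j h
  have h1 : ((i : ℕ) : ℝ) + 1/2 = ((j : ℕ) : ℝ) + 1/2 := congrArg Prod.fst h
  have h2 : ((i : ℕ) : ℝ) = ((j : ℕ) : ℝ) := by linarith
  exact Fin.ext (Nat.cast_injective h2)

def cnt2 (P : Fin n → Fin n → Prop) : ℚ := ∑ a : Fin n, ∑ b : Fin n, ind (P a b)

lemma cnt2_congr (P Q : Fin n → Fin n → Prop) (h : ∀ a b, P a b ↔ Q a b) :
    cnt2 P = cnt2 Q :=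
  Finset.sum_congr rfl fun a _ => Finset.sum_congr rfl fun b _ => ind_congr (h a b)

lemma cnt2_reindex (e1 e2 : Equiv.Perm (Fin n)) (P : Fin n → Fin n → Prop) :
    cnt2 (fun a b => P (e1 a) (e2 b)) = cnt2 P := by
  unfold cnt2
  calc ∑ a : Fin n, ∑ b : Fin n, ind (P (e1 a) (e2 b))
      = ∑ a : Fin n, ∑ b : Fin n, ind (P (e1 a) b) :=
        Finset.sum_congr rfl fun a _ => Equiv.sum_comp e2 (fun b => ind (P (e1 a) b))
    _ = ∑ a : Fin n, ∑ b : Fin n, ind (P a b) :=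
        Equiv.sum_comp e1 (fun a => ∑ b : Fin n, ind (P a b))

lemma cnt2_swap (P : Fin n → Fin n → Prop) : cnt2 P = cnt2 (fun a b => P b a) :=
  Finset.sum_comm

lemma lt_half_iff (a b : ℕ) : (a : ℝ) < (b : ℝ) + 1/2 ↔ a ≤ b := by
  constructor
  · intro h
    by_contra hc
    push_neg at hc
    have : (b : ℝ) + 1 ≤ a := by exact_mod_cast Nat.succ_le_of_lt hc
    linarith
  · intro h
    have : (a : ℝ) ≤ b := by exact_mod_cast h
    linarith

lemma half_lt_iff (a b : ℕ) : (a : ℝ) + 1/2 < (b : ℝ) ↔ a < b := by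
  constructor
  · intro h
    have : (a : ℝ) < b := by linarith
    exact_mod_cast this
  · intro h
    have : (a : ℝ) + 1 ≤ b := by exact_mod_cast Nat.succ_le_of_lt h
    linarith

lemma half_lt_half_iff (a b : ℕ) : (a : ℝ) + 1/2 < (b : ℝ) + 1/2 ↔ a < b := by
  rw [add_lt_add_iff_right, Nat.cast_lt]

lemma Ifun_pp (x : Equiv.Perm (Fin n)) :
    Ifun (Grid.pts x) (Grid.pts x) = cnt2 (fun i j => i < j ∧ x i < x j) := by
  rw [pts_eq, Ifun_eval _ _ (genPt_inj x) (genPt_inj x)]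
  unfold cnt2
  refine Finset.sum_congr rfl fun i _ => Finset.sum_congr rfl fun j _ => ?_
  have hiff : ((genPt x i).1 < (genPt x j).1 ∧ (genPt x i).2 < (genPt x j).2)
      ↔ (i < j ∧ x i < x j) := by
    simp only [genPt]
    rw [Nat.cast_lt, Nat.cast_lt]
    exact (and_congr Fin.lt_def Fin.lt_def).symm
  by_cases h : i < j ∧ x i < x j
  · rw [if_pos (hiff.mpr h), ind_true h]
  · rw [if_neg (fun hh => h (hiff.mp hh)), ind_false h]

lemma Ifun_pm (x σ : Equiv.Perm (Fin n)) :
    Ifun (Grid.pts x) (markComb σ) = cnt2 (fun i j => i ≤ j ∧ x i ≤ σ j) := by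
  rw [pts_eq, markComb, Ifun_eval _ _ (genPt_inj x) (markPt_inj σ)]
  unfold cnt2
  refine Finset.sum_congr rfl fun i _ => Finset.sum_congr rfl fun j _ => ?_
  have hiff : ((genPt x i).1 < (markPt σ j).1 ∧ (genPt x i).2 < (markPt σ j).2)
      ↔ (i ≤ j ∧ x i ≤ σ j) := by
    simp only [genPt, markPt]
    rw [lt_half_iff, lt_half_iff]
    exact (and_congr Fin.le_def Fin.le_def).symm
  by_cases h : i ≤ j ∧ x i ≤ σ j
  · rw [if_pos (hiff.mpr h), ind_true h]
  · rw [if_neg (fun hh => h (hiff.mp hh)), ind_false h]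

lemma Ifun_mp (σ x : Equiv.Perm (Fin n)) :
    Ifun (markComb σ) (Grid.pts x) = cnt2 (fun i j => i < j ∧ σ i < x j) := by
  rw [pts_eq, markComb, Ifun_eval _ _ (markPt_inj σ) (genPt_inj x)]
  unfold cnt2
  refine Finset.sum_congr rfl fun i _ => Finset.sum_congr rfl fun j _ => ?_
  have hiff : ((markPt σ i).1 < (genPt x j).1 ∧ (markPt σ i).2 < (genPt x j).2)
      ↔ (i < j ∧ σ i < x j) := by
    simp only [genPt, markPt]
    rw [half_lt_iff, half_lt_iff]
    exact (and_congr Fin.lt_def Fin.lt_def).symm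
  by_cases h : i < j ∧ σ i < x j
  · rw [if_pos (hiff.mpr h), ind_true h]
  · rw [if_neg (fun hh => h (hiff.mp hh)), ind_false h]

lemma Ifun_mm (σ τ : Equiv.Perm (Fin n)) :
    Ifun (markComb σ) (markComb τ) = cnt2 (fun i j => i < j ∧ σ i < τ j) := by
  rw [markComb, markComb, Ifun_eval _ _ (markPt_inj σ) (markPt_inj τ)]
  unfold cnt2
  refine Finset.sum_congr rfl fun i _ => Finset.sum_congr rfl fun j _ => ?_
  have hiff : ((markPt σ i).1 < (markPt τ j).1 ∧ (markPt σ i).2 < (markPt τ j).2)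
      ↔ (i < j ∧ σ i < τ j) := by
    simp only [markPt]
    rw [half_lt_half_iff, half_lt_half_iff]
    exact (and_congr Fin.lt_def Fin.lt_def).symm
  by_cases h : i < j ∧ σ i < τ j
  · rw [if_pos (hiff.mpr h), ind_true h]
  · rw [if_neg (fun hh => h (hiff.mp hh)), ind_false h]

lemma M_eq (G : Grid n) (x : Equiv.Perm (Fin n)) :
    G.M x = cnt2 (fun i j => i < j ∧ x i < x j)
      - cnt2 (fun i j => i ≤ j ∧ x i ≤ G.σO j)
      - cnt2 (fun i j => i < j ∧ G.σO i < x j)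
      + cnt2 (fun i j => i < j ∧ G.σO i < G.σO j) + 1 := by
  unfold Grid.M Jfun
  rw [OO_eq]
  simp only [Ifun_sub_left, Ifun_sub_right, Ifun_pp, Ifun_pm, Ifun_mp, Ifun_mm]
  ring

lemma A_eq (G : Grid n) (x : Equiv.Perm (Fin n)) :
    G.A x = (cnt2 (fun i j => i ≤ j ∧ x i ≤ G.σX j) + cnt2 (fun i j => i < j ∧ G.σX i < x j)) / 2
      - (cnt2 (fun i j => i ≤ j ∧ x i ≤ G.σO j) + cnt2 (fun i j => i < j ∧ G.σO i < x j)) / 2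
      - (cnt2 (fun i j => i < j ∧ G.σX i < G.σX j) - cnt2 (fun i j => i < j ∧ G.σO i < G.σO j)) / 2
      - ((n : ℚ) - 1) / 2 := by
  unfold Grid.A Jfun
  rw [XX_eq, OO_eq]
  simp only [Ifun_sub_left, Ifun_sub_right, Ifun_add_left, Ifun_add_right,
    Ifun_smul_left, Ifun_smul_right, Ifun_pp, Ifun_pm, Ifun_mp, Ifun_mm]
  ring

end Eval

section Identities
variable {n : ℕ} [NeZero n]

lemma reflGen_apply (x : Equiv.Perm (Fin n)) (i : Fin n) :
    reflGen x i = -(x.symm (-i)) := rfl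

lemma reflGen_neg (x : Equiv.Perm (Fin n)) (a : Fin n) :
    reflGen x (-(x a)) = -a := by
  rw [reflGen_apply, neg_neg, Equiv.symm_apply_apply]

lemma fin_not_lt_zero (b : Fin n) : ¬ (b < (0 : Fin n)) := by
  rw [Fin.lt_def]
  simp [val0]

lemma fin_zero_le (b : Fin n) : (0 : Fin n) ≤ b := by
  rw [Fin.le_def, val0]
  exact Nat.zero_le _

lemma I1 (σ τ : Equiv.Perm (Fin n)) (hτ : ∀ b, τ (Fin.rev (σ b)) = Fin.rev b) :
    cnt2 (fun i j => i < j ∧ τ i < τ j) = cnt2 (fun i j => i < j ∧ σ i < σ j) := by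
  rw [← cnt2_reindex (σ.trans Fin.revPerm) (σ.trans Fin.revPerm)
      (fun i j => i < j ∧ τ i < τ j), cnt2_swap]
  refine cnt2_congr _ _ fun a b => ?_
  show (Fin.rev (σ b) < Fin.rev (σ a) ∧ τ (Fin.rev (σ b)) < τ (Fin.rev (σ a)))
      ↔ (a < b ∧ σ a < σ b)
  rw [hτ, hτ, Fin.rev_lt_rev, Fin.rev_lt_rev]
  exact and_comm

lemma I2 (x σ τ : Equiv.Perm (Fin n)) (hτ : ∀ b, τ (Fin.rev (σ b)) = Fin.rev b) :
    cnt2 (fun i j => i ≤ j ∧ reflGen x i ≤ τ j)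
      = cnt2 (fun i j => i < j ∧ σ i < x j)
        + (if x.symm 0 = 0 then (n : ℚ)
            else ((x 0 : ℕ) : ℚ) + ((x.symm 0 : ℕ) : ℚ)) := by
  have step1 : cnt2 (fun i j => i ≤ j ∧ reflGen x i ≤ τ j)
      = cnt2 (fun a b => (x a = 0 ∨ σ b < x a) ∧ (a = 0 ∨ b < a)) := by
    rw [← cnt2_reindex (x.trans (Equiv.neg (Fin n))) (σ.trans Fin.revPerm)
        (fun i j => i ≤ j ∧ reflGen x i ≤ τ j)]
    refine cnt2_congr _ _ fun a b => ?_
    show ((-(x a) : Fin n) ≤ Fin.rev (σ b) ∧ reflGen x (-(x a)) ≤ τ (Fin.rev (σ b)))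
        ↔ _
    rw [reflGen_neg, hτ b, neg_le_rev_iff, neg_le_rev_iff]
  rw [step1, cnt2_swap (fun i j => i < j ∧ σ i < x j)]
  unfold cnt2
  have hxz : x (x.symm 0) = 0 := x.apply_symm_apply 0
  by_cases hz : x.symm 0 = 0
  · rw [if_pos hz]
    have hx0 : x 0 = 0 := by nth_rewrite 1 [← hz]; exact hxz
    rw [sum_split1 (fun a => ∑ b : Fin n, ind ((x a = 0 ∨ σ b < x a) ∧ (a = 0 ∨ b < a))),
      sum_split1 (fun a => ∑ b : Fin n, ind (b < a ∧ σ b < x a))]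
    have r0 : (∑ b : Fin n, ind ((x 0 = 0 ∨ σ b < x 0) ∧ ((0:Fin n) = 0 ∨ b < 0))) = n := by
      rw [Finset.sum_congr rfl fun b _ => ind_true ⟨Or.inl hx0, Or.inl rfl⟩]
      exact count_true
    have rg0 : (∑ b : Fin n, ind (b < (0:Fin n) ∧ σ b < x 0)) = 0 := by
      rw [Finset.sum_congr rfl fun b _ => ind_false (fun hh => fin_not_lt_zero b hh.1)]
      simp
    have hrows : ∀ a ∈ univ.erase (0 : Fin n),
        (∑ b : Fin n, ind ((x a = 0 ∨ σ b < x a) ∧ (a = 0 ∨ b < a)))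
          = ∑ b : Fin n, ind (b < a ∧ σ b < x a) := by
      intro a ha
      have ha0 : a ≠ 0 := (Finset.mem_erase.mp ha).1
      have hxa : x a ≠ 0 := by
        intro hh
        exact ha0 (by rw [← hz]; nth_rewrite 1 [← hh]; rw [Equiv.symm_apply_apply])
      refine Finset.sum_congr rfl fun b _ => ind_congr ?_
      constructor
      · rintro ⟨h1, h2⟩
        exact ⟨h2.resolve_left ha0, h1.resolve_left hxa⟩
      · rintro ⟨hb, hs⟩
        exact ⟨Or.inr hs, Or.inr hb⟩
    rw [r0, rg0, Finset.sum_congr rfl hrows]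
    ring
  · rw [if_neg hz]
    have hx0 : x 0 ≠ 0 := fun hh => hz (by nth_rewrite 1 [← hh]; rw [Equiv.symm_apply_apply])
    rw [sum_split2 (fun a => ∑ b : Fin n, ind ((x a = 0 ∨ σ b < x a) ∧ (a = 0 ∨ b < a))) hz,
      sum_split2 (fun a => ∑ b : Fin n, ind (b < a ∧ σ b < x a)) hz]
    have r0 : (∑ b : Fin n, ind ((x 0 = 0 ∨ σ b < x 0) ∧ ((0:Fin n) = 0 ∨ b < 0)))
        = ((x 0 : ℕ) : ℚ) := by
      rw [Finset.sum_congr rfl fun b _ => ind_congr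
        (show ((x 0 = 0 ∨ σ b < x 0) ∧ ((0:Fin n) = 0 ∨ b < 0)) ↔ (σ b < x 0) from
          ⟨fun hh => hh.1.resolve_left hx0, fun hh => ⟨Or.inr hh, Or.inl rfl⟩⟩)]
      exact count_lt_perm σ (x 0)
    have rz : (∑ b : Fin n, ind ((x (x.symm 0) = 0 ∨ σ b < x (x.symm 0))
          ∧ (x.symm 0 = 0 ∨ b < x.symm 0))) = ((x.symm 0 : ℕ) : ℚ) := by
      rw [Finset.sum_congr rfl fun b _ => ind_congr
        (show ((x (x.symm 0) = 0 ∨ σ b < x (x.symm 0)) ∧ (x.symm 0 = 0 ∨ b < x.symm 0)) ↔ (b < x.symm 0) from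
          ⟨fun hh => hh.2.resolve_left hz, fun hh => ⟨Or.inl hxz, Or.inr hh⟩⟩)]
      exact count_lt (x.symm 0)
    have rg0 : (∑ b : Fin n, ind (b < (0:Fin n) ∧ σ b < x 0)) = 0 := by
      rw [Finset.sum_congr rfl fun b _ => ind_false (fun hh => fin_not_lt_zero b hh.1)]
      simp
    have rgz : (∑ b : Fin n, ind (b < x.symm 0 ∧ σ b < x (x.symm 0))) = 0 := by
      rw [Finset.sum_congr rfl fun b _ => ind_false
        (fun hh => fin_not_lt_zero (σ b) (by have h2 := hh.2; rwa [hxz] at h2))]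
      simp
    have hrows : ∀ a ∈ (univ.erase (0 : Fin n)).erase (x.symm 0),
        (∑ b : Fin n, ind ((x a = 0 ∨ σ b < x a) ∧ (a = 0 ∨ b < a)))
          = ∑ b : Fin n, ind (b < a ∧ σ b < x a) := by
      intro a ha
      have haz : a ≠ x.symm 0 := (Finset.mem_erase.mp ha).1
      have ha0 : a ≠ 0 := (Finset.mem_erase.mp (Finset.mem_erase.mp ha).2).1
      have hxa : x a ≠ 0 := fun hh => haz (x.injective (hh.trans hxz.symm))
      refine Finset.sum_congr rfl fun b _ => ind_congr ?_
      constructor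
      · rintro ⟨h1, h2⟩
        exact ⟨h2.resolve_left ha0, h1.resolve_left hxa⟩
      · rintro ⟨hb, hs⟩
        exact ⟨Or.inr hs, Or.inr hb⟩
    rw [r0, rz, rg0, rgz, Finset.sum_congr rfl hrows]
    ring

lemma I3 (x σ τ : Equiv.Perm (Fin n)) (hτ : ∀ b, τ (Fin.rev (σ b)) = Fin.rev b) :
    cnt2 (fun i j => i < j ∧ τ i < reflGen x j)
      = cnt2 (fun i j => i ≤ j ∧ x i ≤ σ j)
        - (if x.symm 0 = 0 then (n : ℚ)
            else ((n : ℚ) - ((x 0 : ℕ) : ℚ)) + ((n : ℚ) - ((x.symm 0 : ℕ) : ℚ))) := by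
  have step1 : cnt2 (fun i j => i < j ∧ τ i < reflGen x j)
      = cnt2 (fun a b => (x a ≠ 0 ∧ x a ≤ σ b) ∧ (a ≠ 0 ∧ a ≤ b)) := by
    rw [cnt2_swap (fun i j => i < j ∧ τ i < reflGen x j),
      ← cnt2_reindex (x.trans (Equiv.neg (Fin n))) (σ.trans Fin.revPerm)
        (fun a b => (fun i j => i < j ∧ τ i < reflGen x j) b a)]
    refine cnt2_congr _ _ fun a b => ?_
    show ((Fin.rev (σ b) : Fin n) < -(x a) ∧ τ (Fin.rev (σ b)) < reflGen x (-(x a))) ↔ _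
    rw [reflGen_neg, hτ b, rev_lt_neg_iff, rev_lt_neg_iff]
  rw [step1]
  unfold cnt2
  have hxz : x (x.symm 0) = 0 := x.apply_symm_apply 0
  by_cases hz : x.symm 0 = 0
  · rw [if_pos hz]
    have hx0 : x 0 = 0 := by nth_rewrite 1 [← hz]; exact hxz
    rw [sum_split1 (fun a => ∑ b : Fin n, ind ((x a ≠ 0 ∧ x a ≤ σ b) ∧ (a ≠ 0 ∧ a ≤ b))),
      sum_split1 (fun a => ∑ b : Fin n, ind (a ≤ b ∧ x a ≤ σ b))]
    have r0 : (∑ b : Fin n, ind ((x 0 ≠ 0 ∧ x 0 ≤ σ b) ∧ ((0:Fin n) ≠ 0 ∧ (0:Fin n) ≤ b)))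
        = 0 := by
      rw [Finset.sum_congr rfl fun b _ => ind_false (fun hh => hh.2.1 rfl)]
      simp
    have rg0 : (∑ b : Fin n, ind ((0:Fin n) ≤ b ∧ x 0 ≤ σ b)) = n := by
      rw [Finset.sum_congr rfl fun b _ => ind_true
        ⟨fin_zero_le b, (show x 0 ≤ σ b by rw [hx0]; exact fin_zero_le _)⟩]
      exact count_true
    have hrows : ∀ a ∈ univ.erase (0 : Fin n),
        (∑ b : Fin n, ind ((x a ≠ 0 ∧ x a ≤ σ b) ∧ (a ≠ 0 ∧ a ≤ b)))
          = ∑ b : Fin n, ind (a ≤ b ∧ x a ≤ σ b) := by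
      intro a ha
      have ha0 : a ≠ 0 := (Finset.mem_erase.mp ha).1
      have hxa : x a ≠ 0 := by
        intro hh
        exact ha0 (by rw [← hz]; nth_rewrite 1 [← hh]; rw [Equiv.symm_apply_apply])
      refine Finset.sum_congr rfl fun b _ => ind_congr ?_
      constructor
      · rintro ⟨h1, h2⟩
        exact ⟨h2.2, h1.2⟩
      · rintro ⟨hb, hs⟩
        exact ⟨⟨hxa, hs⟩, ⟨ha0, hb⟩⟩
    rw [r0, rg0, Finset.sum_congr rfl hrows]
    ring
  · rw [if_neg hz]
    have hx0 : x 0 ≠ 0 := fun hh => hz (by nth_rewrite 1 [← hh]; rw [Equiv.symm_apply_apply])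
    rw [sum_split2 (fun a => ∑ b : Fin n, ind ((x a ≠ 0 ∧ x a ≤ σ b) ∧ (a ≠ 0 ∧ a ≤ b))) hz,
      sum_split2 (fun a => ∑ b : Fin n, ind (a ≤ b ∧ x a ≤ σ b)) hz]
    have r0 : (∑ b : Fin n, ind ((x 0 ≠ 0 ∧ x 0 ≤ σ b) ∧ ((0:Fin n) ≠ 0 ∧ (0:Fin n) ≤ b)))
        = 0 := by
      rw [Finset.sum_congr rfl fun b _ => ind_false (fun hh => hh.2.1 rfl)]
      simp
    have rz : (∑ b : Fin n, ind ((x (x.symm 0) ≠ 0 ∧ x (x.symm 0) ≤ σ b)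
          ∧ (x.symm 0 ≠ 0 ∧ x.symm 0 ≤ b))) = 0 := by
      rw [Finset.sum_congr rfl fun b _ => ind_false (fun hh => hh.1.1 hxz)]
      simp
    have rg0 : (∑ b : Fin n, ind ((0:Fin n) ≤ b ∧ x 0 ≤ σ b))
        = (n : ℚ) - ((x 0 : ℕ) : ℚ) := by
      rw [Finset.sum_congr rfl fun b _ => ind_congr
        (show ((0:Fin n) ≤ b ∧ x 0 ≤ σ b) ↔ (x 0 ≤ σ b) from
          ⟨fun hh => hh.2, fun hh => ⟨fin_zero_le b, hh⟩⟩)]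
      exact count_ge_perm σ (x 0)
    have rgz : (∑ b : Fin n, ind (x.symm 0 ≤ b ∧ x (x.symm 0) ≤ σ b))
        = (n : ℚ) - ((x.symm 0 : ℕ) : ℚ) := by
      rw [Finset.sum_congr rfl fun b _ => ind_congr
        (show (x.symm 0 ≤ b ∧ x (x.symm 0) ≤ σ b) ↔ (x.symm 0 ≤ b) from
          ⟨fun hh => hh.1, fun hh => ⟨hh, (show x (x.symm 0) ≤ σ b by rw [hxz]; exact fin_zero_le _)⟩⟩)]
      exact count_ge (x.symm 0)
    have hrows : ∀ a ∈ (univ.erase (0 : Fin n)).erase (x.symm 0),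
        (∑ b : Fin n, ind ((x a ≠ 0 ∧ x a ≤ σ b) ∧ (a ≠ 0 ∧ a ≤ b)))
          = ∑ b : Fin n, ind (a ≤ b ∧ x a ≤ σ b) := by
      intro a ha
      have haz : a ≠ x.symm 0 := (Finset.mem_erase.mp ha).1
      have ha0 : a ≠ 0 := (Finset.mem_erase.mp (Finset.mem_erase.mp ha).2).1
      have hxa : x a ≠ 0 := fun hh => haz (x.injective (hh.trans hxz.symm))
      refine Finset.sum_congr rfl fun b _ => ind_congr ?_
      constructor
      · rintro ⟨h1, h2⟩
        exact ⟨h2.2, h1.2⟩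
      · rintro ⟨hb, hs⟩
        exact ⟨⟨hxa, hs⟩, ⟨ha0, hb⟩⟩
    rw [r0, rz, rg0, rgz, Finset.sum_congr rfl hrows]
    ring

end Identities

section I4sec
variable {n : ℕ} [NeZero n]

lemma count_Ioo_perm (σ : Equiv.Perm (Fin n)) (v : Fin n) (hv : v ≠ 0) :
    ∑ u : Fin n, ind (0 < σ u ∧ σ u < v) = ((v : ℕ) : ℚ) - 1 := by
  rw [show (∑ u : Fin n, ind (0 < σ u ∧ σ u < v))
      = ∑ u : Fin n, (fun w => ind (0 < w ∧ w < v)) (σ u) from rfl,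
    Equiv.sum_comp σ (fun w => ind (0 < w ∧ w < v))]
  exact count_Ioo v hv

lemma I4 (x : Equiv.Perm (Fin n)) :
    cnt2 (fun i j => i < j ∧ reflGen x i < reflGen x j)
      = cnt2 (fun i j => i < j ∧ x i < x j)
        + (if x.symm 0 = 0 then (0 : ℚ)
            else 2 * ((x 0 : ℕ) : ℚ) + 2 * ((x.symm 0 : ℕ) : ℚ) - 2 * (n : ℚ)) := by
  have step1 : cnt2 (fun i j => i < j ∧ reflGen x i < reflGen x j)
      = cnt2 (fun a b => (x b ≠ 0 ∧ (x a = 0 ∨ x b < x a)) ∧ (b ≠ 0 ∧ (a = 0 ∨ b < a))) := by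
    rw [← cnt2_reindex (x.trans (Equiv.neg (Fin n))) (x.trans (Equiv.neg (Fin n)))
        (fun i j => i < j ∧ reflGen x i < reflGen x j)]
    refine cnt2_congr _ _ fun a b => ?_
    show ((-(x a) : Fin n) < -(x b) ∧ reflGen x (-(x a)) < reflGen x (-(x b))) ↔ _
    rw [reflGen_neg, reflGen_neg, neg_lt_neg_iff', neg_lt_neg_iff']
  rw [step1, cnt2_swap (fun i j => i < j ∧ x i < x j)]
  unfold cnt2
  have hxz : x (x.symm 0) = 0 := x.apply_symm_apply 0
  by_cases hz : x.symm 0 = 0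
  · rw [if_pos hz]
    have hx0 : x 0 = 0 := by nth_rewrite 1 [← hz]; exact hxz
    rw [sum_split1 (fun a => ∑ b : Fin n,
        ind ((x b ≠ 0 ∧ (x a = 0 ∨ x b < x a)) ∧ (b ≠ 0 ∧ (a = 0 ∨ b < a)))),
      sum_split1 (fun a => ∑ b : Fin n, ind (b < a ∧ x b < x a))]
    have r0 : (∑ b : Fin n,
        ind ((x b ≠ 0 ∧ (x 0 = 0 ∨ x b < x 0)) ∧ (b ≠ 0 ∧ ((0:Fin n) = 0 ∨ b < 0))))
        = (n : ℚ) - 1 := by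
      rw [Finset.sum_congr rfl fun b _ => ind_congr
        (show ((x b ≠ 0 ∧ (x 0 = 0 ∨ x b < x 0)) ∧ (b ≠ 0 ∧ ((0:Fin n) = 0 ∨ b < 0))) ↔ (b ≠ 0) from
          ⟨fun hh => hh.2.1,
           fun hb => ⟨⟨fun hh => hb (x.injective (hh.trans hx0.symm)), Or.inl hx0⟩,
             ⟨hb, Or.inl rfl⟩⟩⟩)]
      exact count_ne0
    have rc0 : (∑ b : Fin n, ind (b < (0:Fin n) ∧ x b < x 0)) = 0 := by
      rw [Finset.sum_congr rfl fun b _ => ind_false (fun hh => fin_not_lt_zero b hh.1)]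
      simp
    have hrows : ∀ a ∈ univ.erase (0 : Fin n),
        (∑ b : Fin n, ind (b < a ∧ x b < x a))
          = (∑ b : Fin n,
              ind ((x b ≠ 0 ∧ (x a = 0 ∨ x b < x a)) ∧ (b ≠ 0 ∧ (a = 0 ∨ b < a)))) + 1 := by
      intro a ha
      have ha0 : a ≠ 0 := (Finset.mem_erase.mp ha).1
      have hxa : x a ≠ 0 := fun hh => ha0 (by rw [← hz]; nth_rewrite 1 [← hh]; rw [Equiv.symm_apply_apply])
      rw [sum_split1 (fun b => ind (b < a ∧ x b < x a)),
        sum_split1 (fun b => ind ((x b ≠ 0 ∧ (x a = 0 ∨ x b < x a)) ∧ (b ≠ 0 ∧ (a = 0 ∨ b < a))))]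
      have hc0 : ind ((0:Fin n) < a ∧ x 0 < x a) = 1 :=
        ind_true ⟨fin_pos_of_ne ha0, (show x 0 < x a by rw [hx0]; exact fin_pos_of_ne hxa)⟩
      have ht0 : ind ((x 0 ≠ 0 ∧ (x a = 0 ∨ x 0 < x a)) ∧ ((0:Fin n) ≠ 0 ∧ (a = 0 ∨ (0:Fin n) < a)))
          = 0 := ind_false (fun hh => hh.2.1 rfl)
      have hinner : ∀ b ∈ univ.erase (0 : Fin n),
          ind (b < a ∧ x b < x a)
            = ind ((x b ≠ 0 ∧ (x a = 0 ∨ x b < x a)) ∧ (b ≠ 0 ∧ (a = 0 ∨ b < a))) := by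
        intro b hb
        have hb0 : b ≠ 0 := (Finset.mem_erase.mp hb).1
        have hxb : x b ≠ 0 := fun hh => hb0 (by rw [← hz]; nth_rewrite 1 [← hh]; rw [Equiv.symm_apply_apply])
        refine ind_congr ?_
        constructor
        · rintro ⟨h1, h2⟩
          exact ⟨⟨hxb, Or.inr h2⟩, ⟨hb0, Or.inr h1⟩⟩
        · rintro ⟨⟨_, h2⟩, ⟨_, h4⟩⟩
          exact ⟨h4.resolve_left ha0, h2.resolve_left hxa⟩
      rw [hc0, ht0, Finset.sum_congr rfl hinner]
      ring
    rw [r0, rc0, Finset.sum_congr rfl hrows, Finset.sum_add_distrib, Finset.sum_const]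
    have hcard : ((univ.erase (0 : Fin n)).card : ℚ) = (n : ℚ) - 1 := by
      rw [Finset.card_erase_of_mem (mem_univ 0), Finset.card_univ, Fintype.card_fin,
        Nat.cast_sub (Nat.one_le_iff_ne_zero.mpr (NeZero.ne n)), Nat.cast_one]
    rw [nsmul_eq_mul, hcard]
    ring
  · rw [if_neg hz]
    have hx0 : x 0 ≠ 0 := fun hh => hz (by nth_rewrite 1 [← hh]; rw [Equiv.symm_apply_apply])
    rw [sum_split2 (fun a => ∑ b : Fin n,
        ind ((x b ≠ 0 ∧ (x a = 0 ∨ x b < x a)) ∧ (b ≠ 0 ∧ (a = 0 ∨ b < a)))) hz,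
      sum_split2 (fun a => ∑ b : Fin n, ind (b < a ∧ x b < x a)) hz]
    -- special rows of the reflected count
    have r0 : (∑ b : Fin n,
        ind ((x b ≠ 0 ∧ (x 0 = 0 ∨ x b < x 0)) ∧ (b ≠ 0 ∧ ((0:Fin n) = 0 ∨ b < 0))))
        = ((x 0 : ℕ) : ℚ) - 1 := by
      rw [Finset.sum_congr rfl fun b _ => ind_congr
        (show ((x b ≠ 0 ∧ (x 0 = 0 ∨ x b < x 0)) ∧ (b ≠ 0 ∧ ((0:Fin n) = 0 ∨ b < 0))) ↔ (0 < x b ∧ x b < x 0) from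
          ⟨fun hh => ⟨fin_pos_of_ne hh.1.1, hh.1.2.resolve_left hx0⟩,
           fun hh => ⟨⟨hh.1.ne', Or.inr hh.2⟩,
             ⟨fun hb => absurd (hb ▸ hh.2) (lt_irrefl _), Or.inl rfl⟩⟩⟩)]
      exact count_Ioo_perm x (x 0) hx0
    have rz : (∑ b : Fin n,
        ind ((x b ≠ 0 ∧ (x (x.symm 0) = 0 ∨ x b < x (x.symm 0)))
          ∧ (b ≠ 0 ∧ (x.symm 0 = 0 ∨ b < x.symm 0))))
        = ((x.symm 0 : ℕ) : ℚ) - 1 := by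
      rw [Finset.sum_congr rfl fun b _ => ind_congr
        (show ((x b ≠ 0 ∧ (x (x.symm 0) = 0 ∨ x b < x (x.symm 0))) ∧ (b ≠ 0 ∧ (x.symm 0 = 0 ∨ b < x.symm 0))) ↔ (0 < b ∧ b < x.symm 0) from
          ⟨fun hh => ⟨fin_pos_of_ne hh.2.1, hh.2.2.resolve_left hz⟩,
           fun hh => ⟨⟨fun hhh => hh.2.ne (x.injective (hhh.trans hxz.symm)), Or.inl hxz⟩,
             ⟨hh.1.ne', Or.inr hh.2⟩⟩⟩)]
      exact count_Ioo (x.symm 0) hz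
    have rc0 : (∑ b : Fin n, ind (b < (0:Fin n) ∧ x b < x 0)) = 0 := by
      rw [Finset.sum_congr rfl fun b _ => ind_false (fun hh => fin_not_lt_zero b hh.1)]
      simp
    have rcz : (∑ b : Fin n, ind (b < x.symm 0 ∧ x b < x (x.symm 0))) = 0 := by
      rw [Finset.sum_congr rfl fun b _ => ind_false
        (fun hh => fin_not_lt_zero (x b) (by have h2 := hh.2; rwa [hxz] at h2))]
      simp
    have hrows : ∀ a ∈ (univ.erase (0 : Fin n)).erase (x.symm 0),
        (∑ b : Fin n, ind (b < a ∧ x b < x a))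
          = (∑ b : Fin n,
              ind ((x b ≠ 0 ∧ (x a = 0 ∨ x b < x a)) ∧ (b ≠ 0 ∧ (a = 0 ∨ b < a))))
            + ind (x 0 < x a) + ind (x.symm 0 < a) := by
      intro a ha
      have haz : a ≠ x.symm 0 := (Finset.mem_erase.mp ha).1
      have ha0 : a ≠ 0 := (Finset.mem_erase.mp (Finset.mem_erase.mp ha).2).1
      have hxa : x a ≠ 0 := fun hh => haz (x.injective (hh.trans hxz.symm))
      rw [sum_split2 (fun b => ind (b < a ∧ x b < x a)) hz,
        sum_split2 (fun b => ind ((x b ≠ 0 ∧ (x a = 0 ∨ x b < x a))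
          ∧ (b ≠ 0 ∧ (a = 0 ∨ b < a)))) hz]
      have hc0 : ind ((0:Fin n) < a ∧ x 0 < x a) = ind (x 0 < x a) :=
        ind_congr (and_iff_right (fin_pos_of_ne ha0))
      have hcz : ind (x.symm 0 < a ∧ x (x.symm 0) < x a) = ind (x.symm 0 < a) :=
        ind_congr (and_iff_left (show x (x.symm 0) < x a by rw [hxz]; exact fin_pos_of_ne hxa))
      have ht0 : ind ((x 0 ≠ 0 ∧ (x a = 0 ∨ x 0 < x a))
          ∧ ((0:Fin n) ≠ 0 ∧ (a = 0 ∨ (0:Fin n) < a))) = 0 :=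
        ind_false (fun hh => hh.2.1 rfl)
      have htz : ind ((x (x.symm 0) ≠ 0 ∧ (x a = 0 ∨ x (x.symm 0) < x a))
          ∧ (x.symm 0 ≠ 0 ∧ (a = 0 ∨ x.symm 0 < a))) = 0 :=
        ind_false (fun hh => hh.1.1 hxz)
      have hinner : ∀ b ∈ (univ.erase (0 : Fin n)).erase (x.symm 0),
          ind (b < a ∧ x b < x a)
            = ind ((x b ≠ 0 ∧ (x a = 0 ∨ x b < x a)) ∧ (b ≠ 0 ∧ (a = 0 ∨ b < a))) := by
        intro b hb
        have hbz : b ≠ x.symm 0 := (Finset.mem_erase.mp hb).1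
        have hb0 : b ≠ 0 := (Finset.mem_erase.mp (Finset.mem_erase.mp hb).2).1
        have hxb : x b ≠ 0 := fun hh => hbz (x.injective (hh.trans hxz.symm))
        refine ind_congr ?_
        constructor
        · rintro ⟨h1, h2⟩
          exact ⟨⟨hxb, Or.inr h2⟩, ⟨hb0, Or.inr h1⟩⟩
        · rintro ⟨⟨_, h2⟩, ⟨_, h4⟩⟩
          exact ⟨h4.resolve_left ha0, h2.resolve_left hxa⟩
      rw [hc0, hcz, ht0, htz, Finset.sum_congr rfl hinner]
      ring
    have hD1 : (∑ a ∈ (univ.erase (0 : Fin n)).erase (x.symm 0), ind (x 0 < x a))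
        = (n : ℚ) - 1 - ((x 0 : ℕ) : ℚ) := by
      have hs := sum_split2 (fun a => ind (x 0 < x a)) hz
      beta_reduce at hs
      have h1 : ind (x 0 < x 0) = 0 := ind_false (lt_irrefl _)
      have h2 : ind (x 0 < x (x.symm 0)) = 0 :=
        ind_false (fun hh => fin_not_lt_zero (x 0) (by rwa [hxz] at hh))
      rw [h1, h2, count_gt_perm x (x 0)] at hs
      linarith
    have hD2 : (∑ a ∈ (univ.erase (0 : Fin n)).erase (x.symm 0), ind (x.symm 0 < a))
        = (n : ℚ) - 1 - ((x.symm 0 : ℕ) : ℚ) := by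
      have hs := sum_split2 (fun a => ind (x.symm 0 < a)) hz
      beta_reduce at hs
      have h1 : ind (x.symm 0 < (0:Fin n)) = 0 := ind_false (fin_not_lt_zero _)
      have h2 : ind (x.symm 0 < x.symm 0) = 0 := ind_false (lt_irrefl _)
      rw [h1, h2, count_gt (x.symm 0)] at hs
      linarith
    rw [r0, rz, rc0, rcz, Finset.sum_congr rfl hrows, Finset.sum_add_distrib,
      Finset.sum_add_distrib, hD1, hD2]
    ring

end I4sec

section Gradings
variable {n : ℕ} [NeZero n]

lemma M_refl (G H : Grid n)
    (hO : H.σO = (Fin.revPerm.trans G.σO.symm).trans Fin.revPerm)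
    (x : Equiv.Perm (Fin n)) : H.M (reflGen x) = G.M x := by
  have hτ : ∀ b, H.σO (Fin.rev (G.σO b)) = Fin.rev b := by
    intro b
    rw [hO]
    simp
  rw [M_eq, M_eq, I4 x, I2 x G.σO H.σO hτ, I3 x G.σO H.σO hτ, I1 G.σO H.σO hτ]
  by_cases hz : x.symm 0 = 0
  · simp only [if_pos hz]
    ring
  · simp only [if_neg hz]
    ring

lemma A_refl (G H : Grid n)
    (hX : H.σX = (Fin.revPerm.trans G.σX.symm).trans Fin.revPerm)
    (hO : H.σO = (Fin.revPerm.trans G.σO.symm).trans Fin.revPerm)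
    (x : Equiv.Perm (Fin n)) : H.A (reflGen x) = G.A x := by
  have hτX : ∀ b, H.σX (Fin.rev (G.σX b)) = Fin.rev b := by
    intro b
    rw [hX]
    simp
  have hτO : ∀ b, H.σO (Fin.rev (G.σO b)) = Fin.rev b := by
    intro b
    rw [hO]
    simp
  rw [A_eq, A_eq, I2 x G.σX H.σX hτX, I3 x G.σX H.σX hτX,
    I2 x G.σO H.σO hτO, I3 x G.σO H.σO hτO, I1 G.σX H.σX hτX, I1 G.σO H.σO hτO]
  by_cases hz : x.symm 0 = 0
  · simp only [if_pos hz]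
    ring
  · simp only [if_neg hz]
    ring

end Gradings

section PartAB
variable {n : ℕ} [NeZero n]

lemma reflGen_involutive : Function.Involutive (reflGen (n := n)) := by
  intro x
  ext i
  rw [reflGen_apply]
  have hsymm : (reflGen x).symm (-i) = -(x (- -i)) := rfl
  rw [hsymm, neg_neg, neg_neg]

open Fin.CommRing in
lemma reflGen_xUR (G H : Grid n)
    (hX : H.σX = (Fin.revPerm.trans G.σX.symm).trans Fin.revPerm) :
    reflGen G.xUR = H.xLL := by
  refine Equiv.ext fun i => ?_
  show -(G.σX.symm (-i - 1) + 1) = H.σX i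
  rw [hX]
  show _ = Fin.rev (G.σX.symm (Fin.rev i))
  rw [fin_rev_eq, fin_rev_eq]
  have harg : (-1 - i : Fin n) = -i - 1 := by ring
  rw [harg]
  ring

open Fin.CommRing in
lemma reflGen_xLL (G H : Grid n)
    (hX : H.σX = (Fin.revPerm.trans G.σX.symm).trans Fin.revPerm) :
    reflGen G.xLL = H.xUR := by
  refine Equiv.ext fun i => ?_
  show -(G.σX.symm (-i)) = H.σX (i - 1) + 1
  rw [hX]
  show _ = Fin.rev (G.σX.symm (Fin.rev (i - 1))) + 1
  rw [fin_rev_eq, fin_rev_eq]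
  have harg : (-1 - (i - 1) : Fin n) = -i := by ring
  rw [harg]
  ring

end PartAB

section PartD
variable {n : ℕ} [NeZero n]

open Fin.CommRing in
lemma reflAD_involutive : Function.Involutive (Rect.reflAD (n := n)) := by
  intro R
  cases R with
  | mk c r w h wpos wlt hpos hlt =>
    simp only [Rect.reflAD, Rect.mk.injEq]
    refine ⟨by ring, by ring, trivial, trivial⟩


open Fin.CommRing in
lemma connects_reflAD {x y : Equiv.Perm (Fin n)} {R : Rect n}
    (hc : R.Connects x y) :
    (R.reflAD).Connects (reflGen x) (reflGen y) := by
  obtain ⟨h1, h2, h3, h4, h5⟩ := hc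
  refine ⟨?_, ?_, ?_, ?_, ?_⟩
  · show reflGen x (-R.r - (R.h : Fin n)) = -R.c - (R.w : Fin n)
    rw [reflGen_apply]
    have harg : (-(-R.r - (R.h : Fin n)) : Fin n) = R.r + (R.h : Fin n) := by ring
    rw [harg, ← h2, Equiv.symm_apply_apply]
    ring
  · show reflGen x (-R.r - (R.h : Fin n) + (R.h : Fin n)) = -R.c - (R.w : Fin n) + (R.w : Fin n)
    rw [reflGen_apply]
    have harg : (-(-R.r - (R.h : Fin n) + (R.h : Fin n)) : Fin n) = R.r := by ring
    rw [harg, ← h1, Equiv.symm_apply_apply]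
    ring
  · show reflGen y (-R.r - (R.h : Fin n)) = -R.c - (R.w : Fin n) + (R.w : Fin n)
    rw [reflGen_apply]
    have harg : (-(-R.r - (R.h : Fin n)) : Fin n) = R.r + (R.h : Fin n) := by ring
    rw [harg, ← h3, Equiv.symm_apply_apply]
    ring
  · show reflGen y (-R.r - (R.h : Fin n) + (R.h : Fin n)) = -R.c - (R.w : Fin n)
    rw [reflGen_apply]
    have harg : (-(-R.r - (R.h : Fin n) + (R.h : Fin n)) : Fin n) = R.r := by ring
    rw [harg, ← h4, Equiv.symm_apply_apply]
    ring
  · intro k hk1 hk2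
    rw [reflGen_apply, reflGen_apply]
    have hv1 : -k ≠ R.r + (R.h : Fin n) := by
      intro hv
      apply hk1
      show k = -R.r - (R.h : Fin n)
      rw [← neg_neg k, hv]
      ring
    have hv2 : -k ≠ R.r := by
      intro hv
      apply hk2
      show k = -R.r - (R.h : Fin n) + (R.h : Fin n)
      rw [← neg_neg k, hv]
      ring
    have ha1 : y.symm (-k) ≠ R.c := by
      intro ha
      have h' := (Equiv.symm_apply_eq y).mp ha
      rw [h3] at h'
      exact hv1 h'
    have ha2 : y.symm (-k) ≠ R.c + (R.w : Fin n) := by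
      intro ha
      have h' := (Equiv.symm_apply_eq y).mp ha
      rw [h4] at h'
      exact hv2 h'
    have hxy := h5 (y.symm (-k)) ha1 ha2
    have : x.symm (-k) = y.symm (-k) := by
      rw [Equiv.symm_apply_eq, hxy, Equiv.apply_symm_apply]
    rw [this]

lemma window (t : Fin n) {h : ℕ} (h0 : 0 < h) (hn : h < n) :
    ((((h : Fin n) - 1 - t : Fin n)) : ℕ) < h ↔ (t : ℕ) < h := by
  have hval : ((h : Fin n) : ℕ) = h := Fin.val_cast_of_lt hn
  have h1 : ((1 : Fin n) : ℕ) = 1 := by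
    rw [Fin.val_one']
    exact Nat.mod_eq_of_lt (by omega)
  have ht := t.isLt
  simp only [val_sub, hval, h1]
  split_ifs <;> omega

open Fin.CommRing in
lemma XIn_reflAD (G H : Grid n)
    (hX : H.σX = (Fin.revPerm.trans G.σX.symm).trans Fin.revPerm)
    (R : Rect n) (k : Fin n) :
    (R.reflAD).XIn H k ↔ R.XIn G (G.σX.symm (Fin.rev k)) := by
  have hk : k = Fin.rev (G.σX (G.σX.symm (Fin.rev k))) := by
    rw [Equiv.apply_symm_apply, Fin.rev_rev]
  have hσ : H.σX k = Fin.rev (G.σX.symm (Fin.rev k)) := by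
    rw [hX]
    simp
  unfold Rect.XIn
  show ((k - (-R.r - (R.h : Fin n)) : Fin n) : ℕ) < R.h
      ∧ ((H.σX k - (-R.c - (R.w : Fin n)) : Fin n) : ℕ) < R.w ↔ _
  have e1 : (k - (-R.r - (R.h : Fin n)) : Fin n)
      = ((R.h : Fin n)) - 1 - (G.σX (G.σX.symm (Fin.rev k)) - R.r) := by
    nth_rewrite 1 [hk]
    rw [fin_rev_eq]
    ring
  have e2 : (H.σX k - (-R.c - (R.w : Fin n)) : Fin n)
      = ((R.w : Fin n)) - 1 - (G.σX.symm (Fin.rev k) - R.c) := by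
    rw [hσ, fin_rev_eq]
    ring
  rw [e1, e2, window _ R.hpos R.hlt, window _ R.wpos R.wlt]
  exact and_comm

open Fin.CommRing in
lemma OIn_reflAD (G H : Grid n)
    (hO : H.σO = (Fin.revPerm.trans G.σO.symm).trans Fin.revPerm)
    (R : Rect n) (k : Fin n) :
    (R.reflAD).OIn H k ↔ R.OIn G (G.σO.symm (Fin.rev k)) := by
  have hk : k = Fin.rev (G.σO (G.σO.symm (Fin.rev k))) := by
    rw [Equiv.apply_symm_apply, Fin.rev_rev]
  have hσ : H.σO k = Fin.rev (G.σO.symm (Fin.rev k)) := by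
    rw [hO]
    simp
  unfold Rect.OIn
  show ((k - (-R.r - (R.h : Fin n)) : Fin n) : ℕ) < R.h
      ∧ ((H.σO k - (-R.c - (R.w : Fin n)) : Fin n) : ℕ) < R.w ↔ _
  have e1 : (k - (-R.r - (R.h : Fin n)) : Fin n)
      = ((R.h : Fin n)) - 1 - (G.σO (G.σO.symm (Fin.rev k)) - R.r) := by
    nth_rewrite 1 [hk]
    rw [fin_rev_eq]
    ring
  have e2 : (H.σO k - (-R.c - (R.w : Fin n)) : Fin n)
      = ((R.w : Fin n)) - 1 - (G.σO.symm (Fin.rev k) - R.c) := by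
    rw [hσ, fin_rev_eq]
    ring
  rw [e1, e2, window _ R.hpos R.hlt, window _ R.wpos R.wlt]
  exact and_comm

lemma Ocnt_reflAD (G H : Grid n)
    (hO : H.σO = (Fin.revPerm.trans G.σO.symm).trans Fin.revPerm)
    (R : Rect n) : R.Ocnt G = (R.reflAD).Ocnt H := by
  unfold Rect.Ocnt
  refine Finset.card_bij' (fun m _ => Fin.rev (G.σO m)) (fun k _ => G.σO.symm (Fin.rev k))
    ?_ ?_ ?_ ?_
  · intro m hm
    simp only [Finset.mem_filter, Finset.mem_univ, true_and] at hm ⊢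
    rw [OIn_reflAD G H hO, Fin.rev_rev, Equiv.symm_apply_apply]
    exact hm
  · intro k hk
    simp only [Finset.mem_filter, Finset.mem_univ, true_and] at hk ⊢
    exact (OIn_reflAD G H hO R k).mp hk
  · intro m _
    show G.σO.symm (Fin.rev (Fin.rev (G.σO m))) = m
    rw [Fin.rev_rev, Equiv.symm_apply_apply]
  · intro k _
    show Fin.rev (G.σO (G.σO.symm (Fin.rev k))) = k
    rw [Equiv.apply_symm_apply, Fin.rev_rev]

end PartD

/-- Let `H` be obtained from the toroidal grid diagram `G` by
reflection through the antidiagonal, so `H` has an `X`-marking in square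
`(n−1−j, n−1−i)` for each `X`-marked square `(i,j)` of `G` (i.e.
`σX_H = ν ∘ σX_G⁻¹ ∘ ν` with `ν k = n−1−k`), and likewise for the `O`-markings.  Then:
(a) the induced map `ρ` on generators is a bijection;
(b) `ρ` interchanges the canonical generators: `ρ(x^UR(G)) = x^LL(H)` and
    `ρ(x^LL(G)) = x^UR(H)`;
(c) `ρ` preserves the Maslov and Alexander gradings;
(d) for all generators `x`, `y`, reflection of rectangles is a bijection from the
    rectangles connecting `x` to `y` with interiors disjoint from the `X`-markings of
    `G` onto the rectangles connecting `ρ(x)` to `ρ(y)` with interiors disjoint from the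
    `X`-markings of `H`, preserving the number of `O`-markings in the interior. -/
theorem antidiagonal_reflection_symmetry {n : ℕ} [NeZero n] (hn : 2 ≤ n)
    (G H : Grid n)
    (hX : H.σX = (Fin.revPerm.trans G.σX.symm).trans Fin.revPerm)
    (hO : H.σO = (Fin.revPerm.trans G.σO.symm).trans Fin.revPerm) :
    Function.Bijective (reflGen : Equiv.Perm (Fin n) → Equiv.Perm (Fin n)) ∧
    (reflGen G.xUR = H.xLL ∧ reflGen G.xLL = H.xUR) ∧
    (∀ x : Equiv.Perm (Fin n), H.M (reflGen x) = G.M x ∧ H.A (reflGen x) = G.A x) ∧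
    (∀ x y : Equiv.Perm (Fin n),
      Set.BijOn (Rect.reflAD)
        {R : Rect n | R.Connects x y ∧ ∀ k, ¬ R.XIn G k}
        {R : Rect n | R.Connects (reflGen x) (reflGen y) ∧ ∀ k, ¬ R.XIn H k} ∧
      ∀ R : Rect n, R.Connects x y → (∀ k, ¬ R.XIn G k) →
        R.Ocnt G = (R.reflAD).Ocnt H) := by
  have hGX : G.σX = (Fin.revPerm.trans H.σX.symm).trans Fin.revPerm := by
    ext i
    rw [hX]
    simp
  refine ⟨reflGen_involutive.bijective, ⟨reflGen_xUR G H hX, reflGen_xLL G H hX⟩,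
    fun x => ⟨M_refl G H hO x, A_refl G H hX hO x⟩, fun x y => ⟨⟨?_, ?_, ?_⟩, ?_⟩⟩
  · intro R hR
    exact ⟨connects_reflAD hR.1, fun k hh => hR.2 _ ((XIn_reflAD G H hX R k).mp hh)⟩
  · intro R1 _ R2 _ h
    exact reflAD_involutive.injective h
  · intro S hS
    refine ⟨S.reflAD, ⟨?_, ?_⟩, reflAD_involutive S⟩
    · have hcon := connects_reflAD hS.1
      rwa [reflGen_involutive x, reflGen_involutive y] at hcon
    · intro k hh
      exact hS.2 _ ((XIn_reflAD H G hGX S k).mp hh)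
  · intro R _ _
    exact Ocnt_reflAD G H hO R
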